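/- arXiv:2509.09957 — 3 statements merged into one kernel-verified Lean document; each statement's English description precedes it below -/
import Mathlib

section
/- The combined operator T = C⁻P(I − C⁺P)^{-1} maps probability vectors to probability vectors, i.e., the total probability mass is conserved when splitting a Markov chain by whether states lie above or below a reorder threshold. -/
/-!
Write `A = C⁺P`, so that `C⁻P = P - A`. A nonnegative matrix whose column sums are all `< 1`
cannot have a vector with a negative entry satisfying `A y ≤ y`: summing the inequality over the
negative coordinates only, the column sums `< 1` make the left side strictly larger. Hence
`(1 - A) y ≥ 0` forces `y ≥ 0`, so `1 - A` is invertible with a nonnegative inverse, and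
`T = (P - A)(1 - A)⁻¹` is nonnegative. Its column sums are one because
`𝟙ᵀ(P - A) = 𝟙ᵀ - 𝟙ᵀA = 𝟙ᵀ(1 - A)`.
-/

open Matrix Finset

namespace Matrix

theorem diagonal_mul_mem_Icc_of_zero_or_one {n R : Type*} [Fintype n] [DecidableEq n]
    [NonAssocSemiring R] [Preorder R] {c : n → R} (hc : ∀ i, c i = 0 ∨ c i = 1)
    {P : Matrix n n R} (hP : ∀ i j, 0 ≤ P i j) (i j : n) :
    (diagonal c * P) i j ∈ Set.Icc 0 (P i j) := by
  rcases hc i with h | h <;> simp [diagonal_mul, h, hP i j]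

variable {n R : Type*} [Fintype n] [DecidableEq n] [Field R] [LinearOrder R]
  [IsStrictOrderedRing R] {A : Matrix n n R}

theorem nonneg_of_one_sub_mulVec_nonneg (hA : ∀ i j, 0 ≤ A i j) (hcol : ∀ j, ∑ i, A i j < 1)
    {y : n → R} (hy : 0 ≤ (1 - A) *ᵥ y) : 0 ≤ y := by
  rw [sub_mulVec, one_mulVec, sub_nonneg] at hy
  by_contra hneg
  obtain ⟨i₀, hi₀⟩ : ∃ i, y i < 0 := by simpa [Pi.le_def] using hneg
  set N := univ.filter (y · < 0)
  have hN : N.Nonempty := ⟨i₀, mem_filter.2 ⟨mem_univ _, hi₀⟩⟩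
  have upper : ∑ k ∈ N, (∑ j ∈ N, A j k) * y k ≤ ∑ k ∈ N, y k :=
    calc ∑ k ∈ N, (∑ j ∈ N, A j k) * y k = ∑ j ∈ N, ∑ k ∈ N, A j k * y k := by
          simp_rw [sum_mul]; exact sum_comm
      _ ≤ ∑ j ∈ N, (A *ᵥ y) j := sum_le_sum fun j _ =>
          sum_le_sum_of_subset_of_nonneg (filter_subset _ _) fun k _ hk =>
            mul_nonneg (hA j k) (not_lt.1 fun h => hk (mem_filter.2 ⟨mem_univ _, h⟩))
      _ ≤ ∑ j ∈ N, y j := sum_le_sum fun j _ => hy j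
  have lower : ∑ k ∈ N, y k < ∑ k ∈ N, (∑ j ∈ N, A j k) * y k :=
    sum_lt_sum_of_nonempty hN fun k hk => by
      have hsum : ∑ j ∈ N, A j k < 1 :=
        (sum_le_sum_of_subset_of_nonneg (filter_subset _ _) fun j _ _ => hA j k).trans_lt (hcol k)
      nlinarith [(mem_filter.1 hk).2]
  exact lower.not_ge upper

theorem isUnit_one_sub_of_colSum_lt_one (hA : ∀ i j, 0 ≤ A i j) (hcol : ∀ j, ∑ i, A i j < 1) :
    IsUnit (1 - A) := by
  rw [← mulVec_injective_iff_isUnit]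
  intro u v huv
  have hzero : ∀ w, (1 - A) *ᵥ w = 0 → 0 ≤ w := fun w hw =>
    nonneg_of_one_sub_mulVec_nonneg hA hcol hw.ge
  refine le_antisymm ?_ ?_
  · exact sub_nonneg.1 (hzero (v - u) (by rw [mulVec_sub, huv, sub_self]))
  · exact sub_nonneg.1 (hzero (u - v) (by rw [mulVec_sub, huv, sub_self]))

theorem inv_one_sub_nonneg_of_colSum_lt_one (hA : ∀ i j, 0 ≤ A i j)
    (hcol : ∀ j, ∑ i, A i j < 1) (i j : n) : 0 ≤ (1 - A)⁻¹ i j := by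
  have hdet := (isUnit_iff_isUnit_det _).1 (isUnit_one_sub_of_colSum_lt_one hA hcol)
  have hcolumn : 0 ≤ (1 - A)⁻¹ *ᵥ Pi.single j 1 := by
    refine nonneg_of_one_sub_mulVec_nonneg hA hcol ?_
    rw [mulVec_mulVec, mul_nonsing_inv _ hdet, one_mulVec]
    exact Pi.single_nonneg.2 zero_le_one
  simpa [mulVec_single_one] using hcolumn i

theorem sub_mul_inv_one_sub_mem_colStochastic {M : Matrix n n R} (hM : M ∈ colStochastic R n)
    (hA : ∀ i j, 0 ≤ A i j) (hAM : ∀ i j, A i j ≤ M i j) (hcol : ∀ j, ∑ i, A i j < 1) :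
    (M - A) * (1 - A)⁻¹ ∈ colStochastic R n := by
  have hdet := (isUnit_iff_isUnit_det _).1 (isUnit_one_sub_of_colSum_lt_one hA hcol)
  refine mem_colStochastic.2 ⟨fun i j => sum_nonneg fun k _ => ?_, ?_⟩
  · exact mul_nonneg (sub_nonneg.2 (hAM i k)) (inv_one_sub_nonneg_of_colSum_lt_one hA hcol k j)
  · have hmass : (1 : n → R) ᵥ* (M - A) = 1 ᵥ* (1 - A) := by
      rw [vecMul_sub, vecMul_sub, one_vecMul_of_mem_colStochastic hM, vecMul_one]
    rw [← vecMul_vecMul, hmass, vecMul_vecMul, mul_nonsing_inv _ hdet, vecMul_one]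

end Matrix

/-- The operator `T = C⁻P(I − C⁺P)⁻¹` maps probability vectors to probability
vectors: total probability mass is conserved. -/
theorem stmt_9 (n : ℕ) (P : Matrix (Fin n) (Fin n) ℝ)
    (hP_nonneg : ∀ i j, 0 ≤ P i j) (hP_col : ∀ j, ∑ i, P i j = 1)
    (c : Fin n → ℝ) (hc : ∀ i, c i = 0 ∨ c i = 1)
    (Cp Cm : Matrix (Fin n) (Fin n) ℝ)
    (hCp : Cp = Matrix.diagonal c) (hCm : Cm = 1 - Cp)
    (hcol : ∀ j, ∑ i, (Cp * P) i j < 1)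
    (T : Matrix (Fin n) (Fin n) ℝ) (hT : T = Cm * P * (1 - Cp * P)⁻¹)
    (π : Fin n → ℝ) (hπ_nonneg : ∀ i, 0 ≤ π i) (hπ_sum : ∑ i, π i = 1) :
    (∀ i, 0 ≤ T.mulVec π i) ∧ ∑ i, T.mulVec π i = 1 := by
  subst hCp hCm hT
  have hPstoch : P ∈ colStochastic ℝ (Fin n) := mem_colStochastic_iff_sum.2 ⟨hP_nonneg, hP_col⟩
  have hbounds := diagonal_mul_mem_Icc_of_zero_or_one hc hP_nonneg
  have hTstoch : (1 - diagonal c) * P * (1 - diagonal c * P)⁻¹ ∈ colStochastic ℝ (Fin n) := by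
    rw [sub_mul, one_mul]
    exact sub_mul_inv_one_sub_mem_colStochastic hPstoch (fun i j => (hbounds i j).1)
      (fun i j => (hbounds i j).2) hcol
  exact ⟨nonneg_mulVec_of_mem_colStochastic hTstoch hπ_nonneg,
    (sum_mulVec_of_mem_colStochastic hTstoch).trans hπ_sum⟩
end

section
/- For an irreducible aperiodic column-stochastic matrix P on a finite state space, there exists a unique probability vector π with Pπ = π. -/
/-!
If `P v = v` then `|v| ≤ P |v|` entrywise, and a column-stochastic `P` preserves the sum of a
vector, so `P |v| = |v|`. Since `1ᵀ (P - 1) = 0`, the matrix `P - 1` is singular; the absolute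
value of a nonzero vector in its kernel, normalized, is a stationary distribution.
By irreducibility a nonnegative fixed vector is either zero or strictly positive. Applied to
`|v| + v`, which vanishes exactly where `v ≤ 0`, this shows that every fixed vector has constant
sign; the difference of two stationary distributions is fixed with sum zero, hence vanishes.
-/

open Finset

namespace Matrix

variable {R ι : Type*} [Fintype ι]

def IsStationaryDistribution [Semiring R] [PartialOrder R] (P : Matrix ι ι R) (π : ι → R) :
    Prop :=
  (∀ i, 0 ≤ π i) ∧ ∑ i, π i = 1 ∧ P *ᵥ π = π

lemma pow_mulVec_of_mulVec_eq_self [DecidableEq ι] [Semiring R] {P : Matrix ι ι R} {v : ι → R}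
    (hv : P *ᵥ v = v) (m : ℕ) : (P ^ m) *ᵥ v = v := by
  induction m with
  | zero => simp
  | succ m ih => rw [pow_succ, ← mulVec_mulVec, hv, ih]

section LinearOrderedRing

variable [CommRing R] [LinearOrder R] [IsStrictOrderedRing R] {P : Matrix ι ι R} {v : ι → R}

lemma abs_mulVec_le_mulVec_abs (hP : ∀ i j, 0 ≤ P i j) (i : ι) :
    |(P *ᵥ v) i| ≤ (P *ᵥ |v|) i := by
  simp only [mulVec, dotProduct, Pi.abs_apply]
  refine (abs_sum_le_sum_abs _ _).trans_eq (sum_congr rfl fun j _ => ?_)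
  rw [abs_mul, abs_of_nonneg (hP i j)]

variable [DecidableEq ι]

lemma mulVec_abs_of_mulVec_eq_self (hP : P ∈ colStochastic R ι) (hv : P *ᵥ v = v) :
    P *ᵥ |v| = |v| := by
  have hle : ∀ i ∈ univ, |v| i ≤ (P *ᵥ |v|) i := fun i _ => by
    simpa only [hv, Pi.abs_apply] using abs_mulVec_le_mulVec_abs hP.1 (v := v) i
  have hsum : ∑ i, |v| i = ∑ i, (P *ᵥ |v|) i := (sum_mulVec_of_mem_colStochastic hP).symm
  funext i
  exact ((sum_eq_sum_iff_of_le hle).1 hsum i (mem_univ i)).symm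

lemma eq_zero_or_pos_of_mulVec_eq_self (hP : ∀ i j, 0 ≤ P i j)
    (hirr : ∀ i j, ∃ m : ℕ, 0 < (P ^ m) i j) (hv0 : ∀ i, 0 ≤ v i) (hv : P *ᵥ v = v) :
    v = 0 ∨ ∀ i, 0 < v i := by
  by_cases! hne : v = 0
  · exact .inl hne
  obtain ⟨j, hj⟩ := Function.ne_iff.1 hne
  refine .inr fun i => ?_
  obtain ⟨m, hm⟩ := hirr i j
  calc 0 < (P ^ m) i j * v j := mul_pos hm ((hv0 j).lt_of_ne' hj)
    _ ≤ ∑ k, (P ^ m) i k * v k :=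
      single_le_sum (fun k _ => mul_nonneg (pow_apply_nonneg hP m i k) (hv0 k)) (mem_univ j)
    _ = v i := congrFun (pow_mulVec_of_mulVec_eq_self hv m) i

lemma nonneg_or_nonpos_of_mulVec_eq_self (hP : P ∈ colStochastic R ι)
    (hirr : ∀ i j, ∃ m : ℕ, 0 < (P ^ m) i j) (hv : P *ᵥ v = v) :
    (∀ i, 0 ≤ v i) ∨ ∀ i, v i ≤ 0 := by
  have hfix : P *ᵥ (|v| + v) = |v| + v := by
    rw [mulVec_add, mulVec_abs_of_mulVec_eq_self hP hv, hv]
  have hnonneg : ∀ i, 0 ≤ (|v| + v) i := fun i => by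
    simp only [Pi.add_apply, Pi.abs_apply]
    linarith [neg_abs_le (v i)]
  rcases eq_zero_or_pos_of_mulVec_eq_self hP.1 hirr hnonneg hfix with h | h
  · exact .inr fun i => by
      have := congrFun h i
      simp only [Pi.add_apply, Pi.abs_apply, Pi.zero_apply] at this
      linarith [le_abs_self (v i), abs_nonneg (v i)]
  · exact .inl fun i => by
      have := h i
      simp only [Pi.add_apply, Pi.abs_apply] at this
      by_contra! hneg
      rw [abs_of_neg hneg] at this
      linarith

lemma eq_zero_of_mulVec_eq_self_of_sum_eq_zero (hP : P ∈ colStochastic R ι)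
    (hirr : ∀ i j, ∃ m : ℕ, 0 < (P ^ m) i j) (hv : P *ᵥ v = v) (hsum : ∑ i, v i = 0) :
    v = 0 := by
  funext i
  rcases nonneg_or_nonpos_of_mulVec_eq_self hP hirr hv with h | h
  · exact (sum_eq_zero_iff_of_nonneg fun j _ => h j).1 hsum i (mem_univ i)
  · exact (sum_eq_zero_iff_of_nonpos fun j _ => h j).1 hsum i (mem_univ i)

lemma IsStationaryDistribution.eq (hP : P ∈ colStochastic R ι)
    (hirr : ∀ i j, ∃ m : ℕ, 0 < (P ^ m) i j) {π π' : ι → R}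
    (hπ : IsStationaryDistribution P π) (hπ' : IsStationaryDistribution P π') : π = π' := by
  refine sub_eq_zero.1 (eq_zero_of_mulVec_eq_self_of_sum_eq_zero hP hirr ?_ ?_)
  · rw [mulVec_sub, hπ.2.2, hπ'.2.2]
  · simp only [Pi.sub_apply, sum_sub_distrib, hπ.2.1, hπ'.2.1, sub_self]

end LinearOrderedRing

section LinearOrderedField

variable [DecidableEq ι] [Field R] [LinearOrder R] [IsStrictOrderedRing R] {P : Matrix ι ι R}

lemma exists_mulVec_eq_self_of_mem_colStochastic [Nonempty ι] (hP : P ∈ colStochastic R ι) :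
    ∃ v ≠ 0, P *ᵥ v = v := by
  have hdet : (P - 1).det = 0 := by
    refine exists_vecMul_eq_zero_iff.1 ⟨1, one_ne_zero, ?_⟩
    rw [vecMul_sub, hP.2, vecMul_one, sub_self]
  obtain ⟨v, hv_ne, hv⟩ := exists_mulVec_eq_zero_iff.2 hdet
  exact ⟨v, hv_ne, by rwa [sub_mulVec, one_mulVec, sub_eq_zero] at hv⟩

lemma exists_isStationaryDistribution [Nonempty ι] (hP : P ∈ colStochastic R ι) :
    ∃ π, IsStationaryDistribution P π := by
  obtain ⟨v, hv_ne, hv⟩ := exists_mulVec_eq_self_of_mem_colStochastic hP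
  have hpos : 0 < ∑ i, |v i| := by
    obtain ⟨j, hj⟩ := Function.ne_iff.1 hv_ne
    exact sum_pos' (fun i _ => abs_nonneg _) ⟨j, mem_univ j, abs_pos.2 hj⟩
  refine ⟨(∑ i, |v i|)⁻¹ • |v|, fun i => ?_, ?_, ?_⟩
  · simp only [Pi.smul_apply, Pi.abs_apply, smul_eq_mul]
    positivity
  · simp only [Pi.smul_apply, Pi.abs_apply, smul_eq_mul, ← mul_sum]
    exact inv_mul_cancel₀ hpos.ne'
  · rw [mulVec_smul, mulVec_abs_of_mulVec_eq_self hP hv]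

end LinearOrderedField

end Matrix

/-- An irreducible aperiodic column-stochastic matrix on a finite state space has a
unique stationary probability vector `π` with `Pπ = π`. -/
theorem stmt_11 (n : ℕ) (P : Matrix (Fin n) (Fin n) ℝ)
    (hP_nonneg : ∀ i j, 0 ≤ P i j) (hP_col : ∀ j, ∑ i, P i j = 1)
    (hirr : ∀ i j : Fin n, ∃ m : ℕ, 0 < (P ^ m) i j)
    (haper : ∃ i : Fin n, ∀ d : ℕ, (∀ m : ℕ, 0 < (P ^ m) i i → d ∣ m) → d = 1) :
    ∃! π : Fin n → ℝ, (∀ i, 0 ≤ π i) ∧ (∑ i, π i = 1) ∧ P.mulVec π = π := by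
  have hP : P ∈ Matrix.colStochastic ℝ (Fin n) :=
    Matrix.mem_colStochastic_iff_sum.2 ⟨hP_nonneg, hP_col⟩
  obtain ⟨i, -⟩ := haper
  have : Nonempty (Fin n) := ⟨i⟩
  obtain ⟨π, hπ⟩ := Matrix.exists_isStationaryDistribution hP
  exact ⟨π, hπ, fun π' hπ' => Matrix.IsStationaryDistribution.eq hP hirr hπ' hπ⟩
end

section
/- The closed-form expression for the post-delivery distribution: with α ∈ (0,1), column-stochastic P_f, column-stochastic P_q, integers m ≥ 0, k_p ≥ 1, 0 ≤ k_left < k_p, k_right = k_p − k_left, the sum Σ_{i=1}^{k_p} η_i π^q_i where η_i π^q_i equals (1−α)α^{i−1+k_right} P_q P_f^{m+1}(I−α^{k_p}P_f)^{-1}π for i ≤ k_left and (1−α)α^{i−1−k_left} P_q P_f^{m}(I−α^{k_p}P_f)^{-1}π for i > k_left, simplifies to P_q P_f^m [(1−α^{k_right})I + (1−α^{k_p})α^{k_right} P_f (I−α^{k_p}P_f)^{-1}] π. -/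
/-!
Since `P_f` is column stochastic and `0 ≤ α^{k_p} < 1`, the matrix `I − α^{k_p} P_f` is strictly
diagonally dominant by columns, hence invertible, and its inverse `B` satisfies the resolvent
identity `B = I + α^{k_p} P_f B`. The two halves of the sum are geometric sums with values
`α^{k_right}(1 − α^{k_left})` and `1 − α^{k_right}`; substituting the resolvent identity into the
second half turns it into the claimed closed form.
-/

open Finset Matrix

theorem sum_Ioc_one_sub_mul_pow {R : Type*} [CommRing R] (α : R) (r a : ℕ) :
    ∀ d : ℕ, ∑ i ∈ Ioc a (a + d), (1 - α) * α ^ (i - 1 - a + r) = α ^ r * (1 - α ^ d)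
  | 0 => by simp
  | d + 1 => by
    rw [← add_assoc, sum_Ioc_succ_top (Nat.le_add_right a d), sum_Ioc_one_sub_mul_pow α r a d,
      show a + d + 1 - 1 - a = d by omega]
    ring

theorem sum_Icc_one_ite_le {M : Type*} [AddCommMonoid M] (a b : ℕ) (f g : ℕ → M) :
    ∑ i ∈ Icc 1 (a + b), (if i ≤ a then f i else g i) =
      ∑ i ∈ Ioc 0 a, f i + ∑ i ∈ Ioc a (a + b), g i := by
  rw [show Icc 1 (a + b) = Ioc 0 (a + b) from Icc_add_one_left_eq_Ioc 0 _,
    ← sum_Ioc_consecutive _ (Nat.zero_le a) (Nat.le_add_right a b)]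
  congr 1
  · exact sum_congr rfl fun i hi => if_pos (mem_Ioc.mp hi).2
  · exact sum_congr rfl fun i hi => if_neg (not_le.mpr (mem_Ioc.mp hi).1)

namespace Matrix

variable {n : Type*} [Fintype n] [DecidableEq n]

theorem isUnit_det_one_sub_smul_of_mem_colStochastic {P : Matrix n n ℝ}
    (hP : P ∈ colStochastic ℝ n) {c : ℝ} (hc0 : 0 ≤ c) (hc1 : c < 1) :
    IsUnit (1 - c • P).det := by
  refine isUnit_iff_ne_zero.mpr (det_ne_zero_of_sum_col_lt_diag fun k => ?_)
  have hoff : ∀ i ∈ univ.erase k, ‖(1 - c • P) i k‖ = c * P i k := fun i hi => by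
    rw [sub_apply, one_apply_ne (ne_of_mem_erase hi), smul_apply, smul_eq_mul, zero_sub,
      norm_neg, Real.norm_of_nonneg (mul_nonneg hc0 (nonneg_of_mem_colStochastic hP))]
  have hdiag : (1 - c • P) k k = 1 - c * P k k := by simp
  have hPkk : P k k ≤ 1 := le_one_of_mem_colStochastic hP
  rw [sum_congr rfl hoff, ← mul_sum, sum_erase_eq_sub (mem_univ k), sum_col_of_mem_colStochastic hP,
    hdiag, Real.norm_of_nonneg (by nlinarith)]
  nlinarith

theorem inv_one_sub_smul_eq {R : Type*} [CommRing R] {P : Matrix n n R} {c : R}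
    (h : IsUnit (1 - c • P).det) : (1 - c • P)⁻¹ = 1 + c • (P * (1 - c • P)⁻¹) := by
  have hmul := mul_nonsing_inv (1 - c • P) h
  rw [sub_mul, one_mul, smul_mul] at hmul
  exact sub_eq_iff_eq_add.mp hmul

theorem smul_mul_add_smul_mul_of_eq_one_add_smul {R : Type*} [CommRing R] {A P B : Matrix n n R}
    {a b : R} (hB : B = 1 + (a * b) • (P * B)) :
    (b * (1 - a)) • (A * P * B) + (1 - b) • (A * B) =
      A * ((1 - b) • 1 + ((1 - a * b) * b) • (P * B)) := by
  nth_rewrite 2 [hB]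
  simp only [mul_add, mul_one, Matrix.mul_smul, mul_assoc, smul_add, smul_smul]
  module

end Matrix

theorem stmt_13_general (n : ℕ) (Pf Pq : Matrix (Fin n) (Fin n) ℝ)
    (hPf_nonneg : ∀ i j, 0 ≤ Pf i j) (hPf_col : ∀ j, ∑ i, Pf i j = 1)
    (α : ℝ) (hα0 : 0 < α) (hα1 : α < 1)
    (m kp kleft kright : ℕ) (hkleft : kleft < kp)
    (hkright : kright = kp - kleft)
    (π : Fin n → ℝ) :
    (∑ i ∈ Finset.Icc 1 kp,
      if i ≤ kleft then
        ((1 - α) * α ^ (i - 1 + kright)) •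
          ((Pq * Pf ^ (m + 1) * (1 - α ^ kp • Pf)⁻¹).mulVec π)
      else
        ((1 - α) * α ^ (i - 1 - kleft)) •
          ((Pq * Pf ^ m * (1 - α ^ kp • Pf)⁻¹).mulVec π))
    = ((Pq * Pf ^ m) *
        ((1 - α ^ kright) • (1 : Matrix (Fin n) (Fin n) ℝ) +
         ((1 - α ^ kp) * α ^ kright) • (Pf * (1 - α ^ kp • Pf)⁻¹))).mulVec π := by
  have hresolvent := inv_one_sub_smul_eq <| isUnit_det_one_sub_smul_of_mem_colStochastic
    (mem_colStochastic_iff_sum.mpr ⟨hPf_nonneg, hPf_col⟩) (pow_nonneg hα0.le kp)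
    (pow_lt_one₀ hα0.le hα1 (by omega : kp ≠ 0))
  obtain rfl : kp = kleft + kright := by omega
  have hleft := sum_Ioc_one_sub_mul_pow α kright 0 kleft
  have hright := sum_Ioc_one_sub_mul_pow α 0 kleft kright
  simp only [Nat.sub_zero, zero_add, add_zero, pow_zero, one_mul] at hleft hright
  rw [pow_add α kleft kright] at hresolvent ⊢
  rw [sum_Icc_one_ite_le, ← sum_smul, ← sum_smul, hleft, hright, pow_succ, ← mul_assoc,
    ← smul_mulVec, ← smul_mulVec, ← add_mulVec, smul_mul_add_smul_mul_of_eq_one_add_smul hresolvent]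

/-- Closed form for the post-delivery distribution: the sum `Σ_{i=1}^{k_p} η_i π^q_i`
simplifies to
`P_q P_f^m [(1−α^{k_right})I + (1−α^{k_p})α^{k_right} P_f (I−α^{k_p}P_f)⁻¹] π`. -/
theorem stmt_13 (n : ℕ) (Pf Pq : Matrix (Fin n) (Fin n) ℝ)
    (hPf_nonneg : ∀ i j, 0 ≤ Pf i j) (hPf_col : ∀ j, ∑ i, Pf i j = 1)
    (hPq_nonneg : ∀ i j, 0 ≤ Pq i j) (hPq_col : ∀ j, ∑ i, Pq i j = 1)
    (α : ℝ) (hα0 : 0 < α) (hα1 : α < 1)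
    (m kp kleft kright : ℕ) (hkp : 1 ≤ kp) (hkleft : kleft < kp)
    (hkright : kright = kp - kleft)
    (π : Fin n → ℝ) :
    (∑ i ∈ Finset.Icc 1 kp,
      if i ≤ kleft then
        ((1 - α) * α ^ (i - 1 + kright)) •
          ((Pq * Pf ^ (m + 1) * (1 - α ^ kp • Pf)⁻¹).mulVec π)
      else
        ((1 - α) * α ^ (i - 1 - kleft)) •
          ((Pq * Pf ^ m * (1 - α ^ kp • Pf)⁻¹).mulVec π))
    = ((Pq * Pf ^ m) *
        ((1 - α ^ kright) • (1 : Matrix (Fin n) (Fin n) ℝ) +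
         ((1 - α ^ kp) * α ^ kright) • (Pf * (1 - α ^ kp • Pf)⁻¹))).mulVec π :=
  stmt_13_general n Pf Pq hPf_nonneg hPf_col α hα0 hα1 m kp kleft kright hkleft hkright π
end
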